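/- arXiv:1308.3354 — 2 statements merged into one kernel-verified Lean document; each statement's English description precedes it below -/
import Mathlib

section
/- In the coupon-collector process with m coupon types, if X is the number of rounds needed to collect m₀ specified uncollected coupon types (coupons drawn uniformly and independently each round), then for every ε > 0, P(X < (1-ε)(m-1)·ln m) ≤ exp(-m^(-1+ε)·m₀). -/
/-!
Write `q = 1 - 1/m` and `A_c` for the event that coupon `c` shows up within the first `n` rounds.
The events `A_c` are negatively correlated: conditioning on the first draw gives the recursion
`P(⋂_{c ∈ T} A_c; n + 1) = (1/m) ∑_c P(⋂_{c' ∈ T \ {c}} A_{c'}; n)`, and Bernoulli's inequality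
shows that `(1 - q^n)^|T|` is a supersolution of it. Hence `P(X ≤ n) ≤ (1 - q^n)^m₀`, the
coupons that never appear forming a null event. Finally `log q ≥ -1/(m-1)`, so for
`n ≤ (1-ε)(m-1) log m` we get `q^n ≥ m^(-1+ε)`, and `1 - x ≤ exp (-x)` finishes the bound.
-/

open MeasureTheory ProbabilityTheory Finset Filter Real

lemma pow_succ_add_mul_le_add_pow_succ {u d : ℝ} (hu : 0 ≤ u) (hd : 0 ≤ d) (k : ℕ) :
    u ^ (k + 1) + (k + 1) * u ^ k * d ≤ (u + d) ^ (k + 1) := by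
  induction k with
  | zero => simp
  | succ k ih =>
    calc u ^ (k + 1 + 1) + (↑(k + 1) + 1) * u ^ (k + 1) * d
        ≤ u ^ (k + 1 + 1) + (↑(k + 1) + 1) * u ^ (k + 1) * d + (k + 1) * u ^ k * d ^ 2 :=
          le_add_of_nonneg_right (by positivity)
      _ = (u + d) * (u ^ (k + 1) + (k + 1) * u ^ k * d) := by push_cast; ring
      _ ≤ (u + d) * (u + d) ^ (k + 1) := mul_le_mul_of_nonneg_left ih (add_nonneg hu hd)
      _ = (u + d) ^ (k + 1 + 1) := by ring

lemma sum_pow_card_erase_div_le {α : Type*} [Fintype α] [DecidableEq α] {u : ℝ}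
    (hu0 : 0 ≤ u) (hu1 : u ≤ 1) (T : Finset α) :
    ∑ c, u ^ #(T.erase c) / Fintype.card α ≤ (u + (1 - u) / Fintype.card α) ^ #T := by
  rcases T.eq_empty_or_nonempty with rfl | hT
  · simp only [erase_empty, card_empty, pow_zero, sum_const, card_univ, nsmul_eq_mul, mul_one_div]
    exact div_self_le_one _
  obtain ⟨k, hk⟩ := Nat.exists_eq_add_one.2 hT.card_pos
  have hN : (0 : ℝ) < Fintype.card α := by exact_mod_cast hT.card_pos.trans_le T.card_le_univ
  have hsum : ∑ c, u ^ #(T.erase c)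
      = Fintype.card α * u ^ (k + 1) + #T * (u ^ k - u ^ (k + 1)) := by
    have hterm (c : α) :
        u ^ #(T.erase c) = u ^ (k + 1) + if c ∈ T then u ^ k - u ^ (k + 1) else 0 := by
      split_ifs with hc <;> simp [card_erase_of_mem, hc, hk]
    simp only [hterm, sum_add_distrib, sum_ite_mem, univ_inter, sum_const, card_univ,
      nsmul_eq_mul]
  rw [← sum_div, hsum, hk]
  calc _ = u ^ (k + 1) + (k + 1) * u ^ k * ((1 - u) / Fintype.card α) := by
        field_simp; push_cast; ring
    _ ≤ _ := pow_succ_add_mul_le_add_pow_succ hu0 (by have := sub_nonneg.2 hu1; positivity) k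

lemma neg_inv_sub_one_le_log_one_sub_inv {x : ℝ} (hx : 1 < x) : -(x - 1)⁻¹ ≤ log (1 - x⁻¹) := by
  have hq : 0 < 1 - x⁻¹ := sub_pos.2 (inv_lt_one_of_one_lt₀ hx)
  convert one_sub_inv_le_log_of_pos hq using 1
  have : x - 1 ≠ 0 := by linarith
  field_simp
  ring

lemma rpow_neg_one_add_le_one_sub_inv_pow {x ε : ℝ} (hx : 1 < x) {n : ℕ}
    (hn : n ≤ (1 - ε) * (x - 1) * log x) : x ^ (-1 + ε) ≤ (1 - x⁻¹) ^ n := by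
  have hq : 0 < 1 - x⁻¹ := sub_pos.2 (inv_lt_one_of_one_lt₀ hx)
  rw [← log_le_log_iff (by positivity) (by positivity), log_rpow (by positivity), log_pow]
  have hx1 : 0 < x - 1 := by linarith
  have hlog := mul_le_mul_of_nonneg_left (neg_inv_sub_one_le_log_one_sub_inv hx) n.cast_nonneg
  have : -(1 - ε) * log x ≤ n * -(x - 1)⁻¹ := by
    rw [mul_neg, le_neg, ← div_eq_mul_inv, div_le_iff₀ hx1]; linarith
  linarith

lemma one_sub_pow_le_exp_neg_mul {p q : ℝ} (hpq : p ≤ q) (hq : q ≤ 1) (k : ℕ) :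
    (1 - q) ^ k ≤ exp (-p * k) := by
  calc (1 - q) ^ k ≤ exp (-p) ^ k :=
        pow_le_pow_left₀ (by linarith)
          ((by linarith : 1 - q ≤ 1 - p).trans (one_sub_le_exp_neg p)) k
    _ = exp (-p * k) := by rw [← exp_nat_mul]; ring_nf

namespace CouponCollector

variable {Ω ι α : Type*} {draw : ι → Ω → α}

def collected (draw : ι → Ω → α) (T : Finset α) (s : Finset ι) : Set Ω :=
  {ω | ∀ c ∈ T, ∃ r ∈ s, draw r ω = c}

lemma collected_empty_of_nonempty {T : Finset α} (hT : T.Nonempty) :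
    collected draw T (∅ : Finset ι) = ∅ := by
  obtain ⟨c, hc⟩ := hT
  ext ω
  simpa [collected] using ⟨c, hc⟩

lemma collected_insert_subset [DecidableEq α] [DecidableEq ι] (T : Finset α) (a : ι)
    (s : Finset ι) :
    collected draw T (insert a s) ⊆ ⋃ c, {ω | draw a ω = c} ∩ collected draw (T.erase c) s := by
  intro ω hω
  refine Set.mem_iUnion.2 ⟨draw a ω, rfl, fun c hc => ?_⟩
  obtain ⟨r, hr, hrc⟩ := hω c (mem_of_mem_erase hc)
  obtain rfl | hr := mem_insert.1 hr
  · exact absurd hrc.symm (ne_of_mem_erase hc)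
  · exact ⟨r, hr, hrc⟩

lemma mem_collected_range_of_sInf_le {draw : ℕ → Ω → α} {S : Finset α} {ω : Ω} {n : ℕ}
    (hall : ∀ c ∈ S, ∃ r, draw r ω = c)
    (hn : sInf {t | ∀ c ∈ S, ∃ r < t, draw r ω = c} ≤ n) : ω ∈ collected draw S (range n) := by
  have hne : {t | ∀ c ∈ S, ∃ r < t, draw r ω = c}.Nonempty :=
    ((eventually_all_finset S).2 fun c hc => by
      obtain ⟨r, hr⟩ := hall c hc
      exact (eventually_gt_atTop r).mono fun t ht => ⟨r, ht, hr⟩).exists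
  intro c hc
  obtain ⟨r, hr, hrc⟩ := Nat.sInf_mem hne c hc
  exact ⟨r, mem_range.2 (hr.trans_le hn), hrc⟩

variable [MeasurableSpace Ω] [MeasurableSpace α] [MeasurableSingletonClass α] {μ : Measure Ω}

lemma measure_draw_eq_inter_collected [Finite α] (hmeas : ∀ r, Measurable (draw r))
    (hindep : iIndepFun draw μ) {a : ι} {s : Finset ι} (ha : a ∉ s) (c : α) (T : Finset α) :
    μ ({ω | draw a ω = c} ∩ collected draw T s)
      = μ {ω | draw a ω = c} * μ (collected draw T s) := by
  have hcollected : (fun ω (r : s) => draw r ω) ⁻¹' {y | ∀ c ∈ T, ∃ r, y r = c}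
      = collected draw T s := by
    ext ω; simp [collected]
  rw [← hcollected]
  exact (hindep.indepFun_finset {a} s (disjoint_singleton_left.2 ha) hmeas)
    |>.measure_inter_preimage_eq_mul {x | x ⟨a, mem_singleton_self a⟩ = c} _
      (Set.toFinite _).measurableSet (Set.toFinite _).measurableSet

lemma measureReal_collected_le [Fintype α] [DecidableEq α] [DecidableEq ι]
    [IsProbabilityMeasure μ] (hmeas : ∀ r, Measurable (draw r)) (hindep : iIndepFun draw μ)
    (hunif : ∀ r c, μ {ω | draw r ω = c} = (Fintype.card α : ENNReal)⁻¹)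
    (s : Finset ι) (T : Finset α) :
    μ.real (collected draw T s) ≤ (1 - (1 - (Fintype.card α : ℝ)⁻¹) ^ #s) ^ #T := by
  induction s using Finset.induction_on generalizing T with
  | empty =>
    obtain rfl | hT := T.eq_empty_or_nonempty
    · simp [measureReal_le_one]
    · rw [collected_empty_of_nonempty hT, measureReal_empty, card_empty, pow_zero, sub_self,
        zero_pow hT.card_ne_zero]
  | insert a s ha ih =>
    set N : ℝ := ↑(Fintype.card α)
    set u := 1 - (1 - N⁻¹) ^ #s
    have hq0 : 0 ≤ 1 - N⁻¹ := sub_nonneg.2 (Nat.cast_inv_le_one _)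
    have hq1 : 1 - N⁻¹ ≤ 1 := sub_le_self _ (inv_nonneg.2 (Nat.cast_nonneg _))
    have hu0 : 0 ≤ u := sub_nonneg.2 (pow_le_one₀ hq0 hq1)
    have hu1 : u ≤ 1 := sub_le_self _ (pow_nonneg hq0 _)
    calc μ.real (collected draw T (insert a s))
        ≤ ∑ c, μ.real ({ω | draw a ω = c} ∩ collected draw (T.erase c) s) :=
          (measureReal_mono (collected_insert_subset T a s)).trans
            (measureReal_iUnion_fintype_le _)
      _ = ∑ c, μ.real (collected draw (T.erase c) s) / N := by
          refine sum_congr rfl fun c _ => ?_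
          rw [measureReal_def, measure_draw_eq_inter_collected hmeas hindep ha, hunif,
            ENNReal.toReal_mul, ← measureReal_def, ENNReal.toReal_inv, ENNReal.toReal_natCast,
            inv_mul_eq_div]
      _ ≤ ∑ c, u ^ #(T.erase c) / N := by gcongr with c; exact ih _
      _ ≤ (u + (1 - u) / N) ^ #T := sum_pow_card_erase_div_le hu0 hu1 T
      _ = _ := by rw [card_insert_of_notMem ha]; ring

lemma measure_forall_draw_ne [Fintype α] (hmeas : ∀ r, Measurable (draw r))
    (hindep : iIndepFun draw μ)
    (hunif : ∀ r c, μ {ω | draw r ω = c} = (Fintype.card α : ENNReal)⁻¹) (s : Finset ι) (c : α) :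
    μ {ω | ∀ r ∈ s, draw r ω ≠ c} = (1 - (Fintype.card α : ENNReal)⁻¹) ^ #s := by
  have := hindep.isProbabilityMeasure
  have hset : {ω | ∀ r ∈ s, draw r ω ≠ c} = ⋂ r ∈ s, draw r ⁻¹' {c}ᶜ := by
    ext ω; simp
  rw [hset, hindep.measure_inter_preimage_eq_mul s fun _ _ => (measurableSet_singleton c).compl,
    ← prod_const]
  refine prod_congr rfl fun r _ => ?_
  rw [Set.preimage_compl, prob_compl_eq_one_sub (hmeas r (measurableSet_singleton c))]
  exact congrArg _ (hunif r c)

lemma ae_exists_draw_eq [Fintype α] [Infinite ι] (hmeas : ∀ r, Measurable (draw r))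
    (hindep : iIndepFun draw μ)
    (hunif : ∀ r c, μ {ω | draw r ω = c} = (Fintype.card α : ENNReal)⁻¹) :
    ∀ᵐ ω ∂μ, ∀ c, ∃ r, draw r ω = c := by
  rw [ae_all_iff]
  intro c
  rw [ae_iff, ← nonpos_iff_eq_zero]
  have hq : 1 - (Fintype.card α : ENNReal)⁻¹ < 1 :=
    ENNReal.sub_lt_self ENNReal.one_ne_top one_ne_zero (by simp)
  refine ge_of_tendsto' (ENNReal.tendsto_pow_atTop_nhds_zero_of_lt_one hq) fun k => ?_
  obtain ⟨s, hs⟩ := Infinite.exists_subset_card_eq ι k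
  rw [← hs, ← measure_forall_draw_ne hmeas hindep hunif s c]
  exact measure_mono fun ω hω r _ hr => hω ⟨r, hr⟩

end CouponCollector

open CouponCollector

open MeasureTheory ProbabilityTheory in
theorem stmt_4_general {Ω : Type*} [MeasurableSpace Ω] (μ : Measure Ω) [IsProbabilityMeasure μ]
    (m m₀ : ℕ) (hm : 1 < m)
    (draw : ℕ → Ω → Fin m) (hmeas : ∀ r, Measurable (draw r))
    (hindep : iIndepFun draw μ)
    (hunif : ∀ (r : ℕ) (c : Fin m), μ {ω | draw r ω = c} = (m : ENNReal)⁻¹)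
    (S : Finset (Fin m)) (hS : S.card = m₀)
    (X : Ω → ℕ) (hX : ∀ ω, X ω = sInf {t | ∀ i ∈ S, ∃ r < t, draw r ω = i})
    (ε : ℝ) :
    μ {ω | (X ω : ℝ) < (1 - ε) * ((m : ℝ) - 1) * Real.log m}
      ≤ ENNReal.ofReal (Real.exp (-(m : ℝ) ^ (-1 + ε) * m₀)) := by
  set c := (1 - ε) * ((m : ℝ) - 1) * Real.log m
  have hunif' : ∀ r c, μ {ω | draw r ω = c} = (Fintype.card (Fin m) : ENNReal)⁻¹ := by
    simpa using hunif
  obtain hc | hc := lt_or_ge c 0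
  · have hempty : {ω | (X ω : ℝ) < c} = ∅ :=
      Set.eq_empty_of_forall_notMem fun ω hω => (Nat.cast_nonneg (X ω)).not_gt (hω.trans hc)
    simp [hempty]
  set n := ⌊c⌋₊
  -- Off a null set every coupon appears, so the `sInf` defining `X` is not that of `∅` (`= 0`).
  have hevent : {ω | (X ω : ℝ) < c} ≤ᵐ[μ] collected draw S (range n) := by
    filter_upwards [ae_exists_draw_eq hmeas hindep hunif'] with ω hall hlt
    exact mem_collected_range_of_sInf_le (fun i _ => hall i) (hX ω ▸ Nat.le_floor hlt.le)
  have hq : (m : ℝ) ^ (-1 + ε) ≤ (1 - (m : ℝ)⁻¹) ^ n :=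
    rpow_neg_one_add_le_one_sub_inv_pow (by exact_mod_cast hm) (Nat.floor_le hc)
  calc μ {ω | (X ω : ℝ) < c} ≤ μ (collected draw S (range n)) := measure_mono_ae hevent
    _ = ENNReal.ofReal (μ.real (collected draw S (range n))) := by rw [ofReal_measureReal]
    _ ≤ _ := by
      refine ENNReal.ofReal_le_ofReal ((measureReal_collected_le hmeas hindep hunif' _ S).trans ?_)
      have hq1 : (1 - (m : ℝ)⁻¹) ^ n ≤ 1 :=
        pow_le_one₀ (sub_nonneg.2 (Nat.cast_inv_le_one m)) (by simp)
      simpa [hS] using one_sub_pow_le_exp_neg_mul hq hq1 m₀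

open MeasureTheory ProbabilityTheory in
/-- Coupon-collector tail bound: with `m` coupon types drawn uniformly and independently each
round, if `X` is the number of rounds needed to collect the `m₀` types in a specified set `S`
of uncollected types, then for every `ε > 0`,
`P(X < (1-ε)(m-1)·ln m) ≤ exp (-m^(-1+ε)·m₀)`. -/
theorem stmt_4 {Ω : Type*} [MeasurableSpace Ω] (μ : Measure Ω) [IsProbabilityMeasure μ]
    (m m₀ : ℕ) (hm : 1 < m) (hm₀ : 0 < m₀) (hm₀m : m₀ ≤ m)
    (draw : ℕ → Ω → Fin m) (hmeas : ∀ r, Measurable (draw r))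
    (hindep : iIndepFun draw μ)
    (hunif : ∀ (r : ℕ) (c : Fin m), μ {ω | draw r ω = c} = (m : ENNReal)⁻¹)
    (S : Finset (Fin m)) (hS : S.card = m₀)
    (X : Ω → ℕ) (hX : ∀ ω, X ω = sInf {t | ∀ i ∈ S, ∃ r < t, draw r ω = i})
    (ε : ℝ) (hε : 0 < ε) :
    μ {ω | (X ω : ℝ) < (1 - ε) * ((m : ℝ) - 1) * Real.log m}
      ≤ ENNReal.ofReal (Real.exp (-(m : ℝ) ^ (-1 + ε) * m₀)) :=
  stmt_4_general μ m m₀ hm draw hmeas hindep hunif S hS X hX ε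
end

section
/- Let X₁, ..., X_{m₀} be indicator random variables where X_i = 1 iff coupon type i appears within the first T rounds of the coupon-collector process with m types. Then for any set I ⊆ {1,...,m₀} and j ∉ I, P(X_i = 1 for all i ∈ I and X_j = 1) ≤ P(X_i = 1 for all i ∈ I) · P(X_j = 1). -/
/-!
Write `A` for the event that every coupon of `I` is drawn and `B` for the event that `j` is drawn.
The law of the first `T` draws is uniform on sequences `Fin T → Fin m`, so it suffices to count,
and by passing to the complement of `B` the claim becomes `|A| |Bᶜ| ≤ m^T |A ∩ Bᶜ|`. Given
`f ∈ A` and `c ∈ Bᶜ`, swap `f` and `c` at the rounds where `f` does not draw `j`. The second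
sequence of the result avoids `j` and still covers `I` (since `j ∉ I`), and the swap is an
involution on pairs whose second sequence avoids `j`, so it maps `A × Bᶜ` injectively into
`(Fin T → Fin m) × (A ∩ Bᶜ)`.
-/

open Set

lemma Set.ncard_inter_mul_le_of_mul_ncard_compl_le {α : Type*} [Finite α] (s t : Set α)
    (h : s.ncard * tᶜ.ncard ≤ Nat.card α * (s ∩ tᶜ).ncard) :
    (s ∩ t).ncard * Nat.card α ≤ s.ncard * t.ncard := by
  have hs := ncard_inter_add_ncard_sdiff_eq_ncard s t
  have ht := ncard_add_ncard_compl t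
  rw [sdiff_eq] at hs
  nlinarith

section SwapWhereNe

variable {ι α : Type*} [DecidableEq α] (j : α)

def swapWhereNe (p : (ι → α) × (ι → α)) : (ι → α) × (ι → α) :=
  (fun r => if p.1 r = j then p.1 r else p.2 r, fun r => if p.1 r = j then p.2 r else p.1 r)

variable {j} {p : (ι → α) × (ι → α)}

lemma swapWhereNe_snd_ne (hp : ∀ r, p.2 r ≠ j) (r : ι) : (swapWhereNe j p).2 r ≠ j := by
  dsimp only [swapWhereNe]
  split_ifs with h
  · exact hp r
  · exact h

-- The rounds where the first sequence draws `j` are unchanged, because `p.2` never draws `j`.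
lemma swapWhereNe_swapWhereNe (hp : ∀ r, p.2 r ≠ j) : swapWhereNe j (swapWhereNe j p) = p := by
  ext r <;> by_cases h : p.1 r = j <;> simp [swapWhereNe, h, hp r]

lemma subset_range_swapWhereNe_snd {I : Set α} (hj : j ∉ I) (hI : I ⊆ range p.1) :
    I ⊆ range (swapWhereNe j p).2 := by
  rintro i hi
  obtain ⟨r, rfl⟩ := hI hi
  refine ⟨r, ?_⟩
  have : p.1 r ≠ j := fun h => hj (h ▸ hi)
  simp [swapWhereNe, this]

end SwapWhereNe

lemma ncard_subset_range_inter_mem_range_mul_le {ι α : Type*} [Finite ι] [Finite α]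
    {I : Set α} {j : α} (hj : j ∉ I) :
    ({f : ι → α | I ⊆ range f} ∩ {f | j ∈ range f}).ncard * Nat.card (ι → α)
      ≤ {f : ι → α | I ⊆ range f}.ncard * {f : ι → α | j ∈ range f}.ncard := by
  classical
  apply ncard_inter_mul_le_of_mul_ncard_compl_le
  have hsnd (p : (ι → α) × (ι → α)) (hp : j ∉ range p.2) : ∀ r, p.2 r ≠ j :=
    fun r h => hp ⟨r, h⟩
  rw [← ncard_prod, ← ncard_univ, ← ncard_prod]
  refine ncard_le_ncard_of_injOn (swapWhereNe j) ?_ ?_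
  · rintro p ⟨hI, hp⟩
    refine ⟨mem_univ _, subset_range_swapWhereNe_snd hj hI, ?_⟩
    rintro ⟨r, hr⟩
    exact swapWhereNe_snd_ne (hsnd p hp) r hr
  · refine LeftInvOn.injOn (f₁' := swapWhereNe j) fun p hp => ?_
    exact swapWhereNe_swapWhereNe (hsnd p hp.2)

open MeasureTheory ProbabilityTheory ENNReal

lemma ENNReal.natCast_mul_le_of_mul_le {a b c n : ℕ} {q : ℝ≥0∞} (h : a * n ≤ b * c)
    (hq : n * q = 1) : a * q ≤ b * q * (c * q) :=
  calc (a : ℝ≥0∞) * q = (a * n : ℕ) * q * q := by rw [Nat.cast_mul, mul_assoc (a : ℝ≥0∞), hq, mul_one]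
    _ ≤ (b * c : ℕ) * q * q := by gcongr
    _ = b * q * (c * q) := by push_cast; ring

section Draws

variable {Ω ι α : Type*} [MeasurableSpace Ω] {μ : Measure Ω} [MeasurableSpace α]
  [MeasurableSingletonClass α] {draw : ι → Ω → α} {q : ℝ≥0∞}

lemma ProbabilityTheory.iIndepFun.measure_forall_eq [Fintype ι] (hindep : iIndepFun draw μ)
    (hq : ∀ i c, μ {ω | draw i ω = c} = q) (f : ι → α) :
    μ {ω | ∀ i, draw i ω = f i} = q ^ Fintype.card ι := by
  have hset : {ω | ∀ i, draw i ω = f i} = ⋂ i, draw i ⁻¹' {f i} := by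
    ext ω; simp
  rw [hset, hindep.meas_iInter fun i => ⟨{f i}, measurableSet_singleton _, rfl⟩]
  simp [preimage, hq]

lemma ProbabilityTheory.iIndepFun.measure_preimage_eq_ncard_mul [Fintype ι] [Finite α]
    (hindep : iIndepFun draw μ) (hmeas : ∀ i, Measurable (draw i))
    (hq : ∀ i c, μ {ω | draw i ω = c} = q) (s : Set (ι → α)) :
    μ ((fun ω i => draw i ω) ⁻¹' s) = s.ncard * q ^ Fintype.card ι := by
  have hfiber (f : ι → α) : (fun ω i => draw i ω) ⁻¹' {f} = {ω | ∀ i, draw i ω = f i} := by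
    ext ω; simp [funext_iff]
  have hX : Measurable fun ω i => draw i ω := measurable_pi_lambda _ hmeas
  rw [← s.toFinite.coe_toFinset, ← sum_measure_preimage_singleton _
    fun f _ => hX (measurableSet_singleton f)]
  simp [hfiber, hindep.measure_forall_eq hq, ncard_eq_toFinset_card s]

end Draws

open MeasureTheory ProbabilityTheory in
theorem stmt_5_general {Ω : Type*} [MeasurableSpace Ω] (μ : Measure Ω)
    (m : ℕ) (hm : 1 < m)
    (draw : ℕ → Ω → Fin m) (hmeas : ∀ r, Measurable (draw r))
    (hindep : iIndepFun draw μ)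
    (hunif : ∀ (r : ℕ) (c : Fin m), μ {ω | draw r ω = c} = (m : ENNReal)⁻¹)
    (T : ℕ)
    (I : Finset (Fin m)) (j : Fin m) (hj : j ∉ I) :
    μ {ω | (∀ i ∈ I, ∃ r < T, draw r ω = i) ∧ (∃ r < T, draw r ω = j)}
      ≤ μ {ω | ∀ i ∈ I, ∃ r < T, draw r ω = i} * μ {ω | ∃ r < T, draw r ω = j} := by
  set X : Ω → Fin T → Fin m := fun ω r => draw r ω
  set q : ℝ≥0∞ := (m : ℝ≥0∞)⁻¹ ^ T
  have hlaw (s : Set (Fin T → Fin m)) : μ (X ⁻¹' s) = s.ncard * q := by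
    simpa using (hindep.precomp Fin.val_injective).measure_preimage_eq_ncard_mul
      (fun r => hmeas r) (fun r => hunif r) s
  have hmem (ω : Ω) (c : Fin m) : (∃ r < T, draw r ω = c) ↔ c ∈ range (X ω) := by
    simp [X, Fin.exists_iff]
  have hcount := ncard_subset_range_inter_mem_range_mul_le (ι := Fin T) (I := (I : Set (Fin m)))
    (j := j) (by simpa)
  rw [Nat.card_fun, Nat.card_fin, Nat.card_fin] at hcount
  have hq : ((m ^ T : ℕ) : ℝ≥0∞) * q = 1 := by
    rw [Nat.cast_pow, ← mul_pow, ENNReal.mul_inv_cancel (Nat.cast_ne_zero.2 (by omega)) (by simp),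
      one_pow]
  simp only [hmem]
  change μ (X ⁻¹' ({f | ↑I ⊆ range f} ∩ {f | j ∈ range f}))
    ≤ μ (X ⁻¹' {f | ↑I ⊆ range f}) * μ (X ⁻¹' {f | j ∈ range f})
  rw [hlaw, hlaw, hlaw]
  exact ENNReal.natCast_mul_le_of_mul_le hcount hq

open MeasureTheory ProbabilityTheory in
/-- Negative correlation in the coupon collector process: with `m` coupon types drawn
uniformly and independently each round and `T` a fixed positive integer, for coupon types
indexed by a set `S` of size `m₀`, any `I ⊆ S` and `j ∈ S` with `j ∉ I`, the probability that
all coupons in `I` and coupon `j` appear within the first `T` rounds is at most the product of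
the probability that all coupons in `I` appear and the probability that coupon `j` appears. -/
theorem stmt_5 {Ω : Type*} [MeasurableSpace Ω] (μ : Measure Ω) [IsProbabilityMeasure μ]
    (m m₀ : ℕ) (hm : 1 < m) (hm₀ : 0 < m₀) (hm₀m : m₀ ≤ m)
    (draw : ℕ → Ω → Fin m) (hmeas : ∀ r, Measurable (draw r))
    (hindep : iIndepFun draw μ)
    (hunif : ∀ (r : ℕ) (c : Fin m), μ {ω | draw r ω = c} = (m : ENNReal)⁻¹)
    (T : ℕ) (hT : 0 < T)
    (S : Finset (Fin m)) (hS : S.card = m₀)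
    (I : Finset (Fin m)) (hI : I ⊆ S) (j : Fin m) (hjS : j ∈ S) (hj : j ∉ I) :
    μ {ω | (∀ i ∈ I, ∃ r < T, draw r ω = i) ∧ (∃ r < T, draw r ω = j)}
      ≤ μ {ω | ∀ i ∈ I, ∃ r < T, draw r ω = i} * μ {ω | ∃ r < T, draw r ω = j} :=
  stmt_5_general μ m hm draw hmeas hindep hunif T I j hj
end
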